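/- Let G be a simple graph on n vertices with maximum degree at most d, let S₁, S₂ be disjoint nonempty subsets of V, let 0 < θ < 1, and for i = 1, 2 let Tᵢ ⊆ Sᵢ be nonempty with |Tᵢ| ≥ (1 − θ)|Sᵢ|. Then for all reals α, β: ‖(αq_{S₁}⁰ + βq_{S₂}⁰) − (αq_{T₁}⁰ + βq_{T₂}⁰)‖² ≤ (θ/(1 − θ))·(α²/|S₁| + β²/|S₂|). -/

import Mathlib

open scoped RealInnerProductSpace

open scoped Classical in
/-- The lazy random walk matrix of a graph `G` with degree parameter `d`. -/
noncomputable def lazyWalk {n : ℕ} (G : SimpleGraph (Fin n)) (d : ℕ) :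
    Matrix (Fin n) (Fin n) ℝ :=
  Matrix.of fun u v =>
    if u = v then 1 - ((G.neighborSet u).ncard : ℝ) / (2 * d)
    else if G.Adj u v then 1 / (2 * d) else 0

/-- `G` has maximum degree at most `d`. -/
def MaxDegreeLE {n : ℕ} (G : SimpleGraph (Fin n)) (d : ℕ) : Prop :=
  ∀ v, (G.neighborSet v).ncard ≤ d

/-- `p_u^t`: the endpoint distribution of a length-`t` lazy random walk from `u`. -/
noncomputable def pvec {n : ℕ} (G : SimpleGraph (Fin n)) (d t : ℕ) (u : Fin n) :
    EuclideanSpace ℝ (Fin n) :=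
  WithLp.toLp 2 (fun v => ((lazyWalk G d ^ t).mulVec fun w => if w = u then 1 else 0) v)

/-- `q_u^t = p_u^t - (1/n) 𝟙`. -/
noncomputable def qvec {n : ℕ} (G : SimpleGraph (Fin n)) (d t : ℕ) (u : Fin n) :
    EuclideanSpace ℝ (Fin n) :=
  WithLp.toLp 2 (fun v => pvec G d t u v - 1 / n)

/-- `q_u^0 = 1_u - (1/n) 𝟙`. -/
noncomputable def qzero {n : ℕ} (u : Fin n) : EuclideanSpace ℝ (Fin n) :=
  WithLp.toLp 2 (fun v => ((if v = u then 1 else 0) - 1 / n : ℝ))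

/-- average of `q_u^0` over `u ∈ S`. -/
noncomputable def qavg {n : ℕ} (S : Finset (Fin n)) : EuclideanSpace ℝ (Fin n) :=
  (S.card : ℝ)⁻¹ • ∑ u ∈ S, qzero u

/-- `a` and `b` are `ε`-close to collinear. -/
def CloseCollinear {E : Type*} [NormedAddCommGroup E] [NormedSpace ℝ E]
    (ε : ℝ) (a b : E) : Prop :=
  ∃ (ea eb w : E) (s s' : ℝ),
    ‖ea‖ ≤ ε ∧ ‖eb‖ ≤ ε ∧ a + ea = s • w ∧ b + eb = s' • w

/-- `a` and `b` are `ε`-close to antipodal. -/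
def CloseAntipodal {E : Type*} [NormedAddCommGroup E] [NormedSpace ℝ E]
    (ε : ℝ) (a b : E) : Prop :=
  ∃ (ea eb w : E) (s s' : ℝ), 0 ≤ s ∧ 0 ≤ s' ∧
    ‖ea‖ ≤ ε ∧ ‖eb‖ ≤ ε ∧ a + ea = s • w ∧ b + eb = -(s' • w)

/-- `a` and `b` are `ε`-close to podal. -/
def ClosePodal {E : Type*} [NormedAddCommGroup E] [NormedSpace ℝ E]
    (ε : ℝ) (a b : E) : Prop :=
  ∃ (ea eb w : E) (s s' : ℝ), 0 ≤ s ∧ 0 ≤ s' ∧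
    ‖ea‖ ≤ ε ∧ ‖eb‖ ≤ ε ∧ a + ea = s • w ∧ b + eb = s' • w

/-- The Gram matrix `A_{u,v}` of two vectors. -/
noncomputable def gram2 {n : ℕ} (a b : EuclideanSpace ℝ (Fin n)) :
    Matrix (Fin 2) (Fin 2) ℝ :=
  !![‖a‖ ^ 2, ⟪a, b⟫; ⟪b, a⟫, ‖b‖ ^ 2]

/-- Number of edges of `G` between `S` and `C \ S` (for `S ⊆ C`). -/
noncomputable def cutEdgesIn {n : ℕ} (G : SimpleGraph (Fin n)) (C S : Finset (Fin n)) : ℕ :=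
  {p : Fin n × Fin n | p.1 ∈ S ∧ p.2 ∈ C ∧ p.2 ∉ S ∧ G.Adj p.1 p.2}.ncard

/-- Number of edges of `G` between `S` and its complement. -/
noncomputable def cutEdges {n : ℕ} (G : SimpleGraph (Fin n)) (S : Finset (Fin n)) : ℕ :=
  cutEdgesIn G Finset.univ S

/-- The cut conductance `φ_G(S) = e(S, V∖S) / (d|S|)`. -/
noncomputable def cutCond {n : ℕ} (G : SimpleGraph (Fin n)) (d : ℕ) (S : Finset (Fin n)) : ℝ :=
  (cutEdges G S : ℝ) / (d * S.card)

/-- The (inner) conductance of the induced subgraph `G[C]` is at least `φ`. -/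
def InnerConductanceGE {n : ℕ} (G : SimpleGraph (Fin n)) (d : ℕ) (C : Finset (Fin n))
    (φ : ℝ) : Prop :=
  ∀ S ⊆ C, S.Nonempty → 2 * S.card ≤ C.card →
    φ ≤ (cutEdgesIn G C S : ℝ) / (d * S.card)

/-- `G` is `(2, φ)`-clusterable. -/
def Clusterable2 {n : ℕ} (G : SimpleGraph (Fin n)) (d : ℕ) (φ : ℝ) : Prop :=
  InnerConductanceGE G d Finset.univ φ ∨
  ∃ C₁ C₂ : Finset (Fin n), C₁.Nonempty ∧ C₂.Nonempty ∧ Disjoint C₁ C₂ ∧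
    C₁ ∪ C₂ = Finset.univ ∧ InnerConductanceGE G d C₁ φ ∧ InnerConductanceGE G d C₂ φ

/-- `G` is `ε`-far from `(2, φ)`-clusterable. -/
def FarFromClusterable2 {n : ℕ} (G : SimpleGraph (Fin n)) (d : ℕ) (ε φ : ℝ) : Prop :=
  ∀ G' : SimpleGraph (Fin n), MaxDegreeLE G' d →
    ((symmDiff G.edgeSet G'.edgeSet).ncard : ℝ) ≤ ε * d * n →
    ¬ Clusterable2 G' d φ

/-- The span of the eigenvectors of `M` with eigenvalue greater than `c`. -/
noncomputable def heavySpace {n : ℕ} (M : Matrix (Fin n) (Fin n) ℝ) (c : ℝ) :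
    Submodule ℝ (EuclideanSpace ℝ (Fin n)) :=
  ⨆ μ : {μ : ℝ // c < μ}, Module.End.eigenspace (Matrix.toEuclideanLin M) (μ : ℝ)

/-- Orthogonal projection onto the span of the eigenvectors of `M` with eigenvalue
greater than `c`. -/
noncomputable def heavyProj {n : ℕ} (M : Matrix (Fin n) (Fin n) ℝ) (c : ℝ)
    (x : EuclideanSpace ℝ (Fin n)) : EuclideanSpace ℝ (Fin n) :=
  (Submodule.orthogonalProjection (heavySpace M c) x : EuclideanSpace ℝ (Fin n))

/-!
After the common shift by `(1/n) 𝟙` cancels, `q_S⁰ - q_T⁰` is the difference of the uniform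
distributions on `S` and `T`. For `T ⊆ S` its squared norm is `1/|T| - 1/|S|`, at most
`θ / ((1 - θ) |S|)` when `|T| ≥ (1 - θ) |S|`; the differences for `i = 1, 2` are supported on the
disjoint sets `Sᵢ`, hence orthogonal, and Pythagoras adds the two contributions.
-/

lemma inner_eq_zero_of_forall_apply_eq_zero_or {ι : Type*} [Fintype ι] {x y : EuclideanSpace ℝ ι}
    (h : ∀ v, x v = 0 ∨ y v = 0) : ⟪x, y⟫ = 0 := by
  rw [PiLp.inner_apply]
  refine Finset.sum_eq_zero fun v _ => ?_
  rcases h v with hx | hy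
  · simp [hx]
  · simp [hy]

lemma norm_smul_add_smul_sq_of_inner_eq_zero {E : Type*} [NormedAddCommGroup E]
    [InnerProductSpace ℝ E] {x y : E} (h : ⟪x, y⟫ = 0) (a b : ℝ) :
    ‖a • x + b • y‖ ^ 2 = a ^ 2 * ‖x‖ ^ 2 + b ^ 2 * ‖y‖ ^ 2 := by
  rw [norm_add_sq_real, real_inner_smul_left, real_inner_smul_right, h, norm_smul, norm_smul,
    Real.norm_eq_abs, Real.norm_eq_abs, mul_pow, mul_pow, sq_abs, sq_abs]
  ring

lemma inv_sub_inv_le_of_one_sub_mul_le {θ s t : ℝ} (hθ : θ < 1) (hs : 0 < s)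
    (h : (1 - θ) * s ≤ t) : t⁻¹ - s⁻¹ ≤ θ / (1 - θ) * s⁻¹ := by
  have hθ' : 0 < 1 - θ := by linarith
  have ht : t⁻¹ ≤ ((1 - θ) * s)⁻¹ := inv_anti₀ (by positivity) h
  have hid : ((1 - θ) * s)⁻¹ - s⁻¹ = θ / (1 - θ) * s⁻¹ := by
    field_simp
    ring
  linarith

noncomputable def uniformVec {ι : Type*} [Fintype ι] [DecidableEq ι] (S : Finset ι) :
    EuclideanSpace ℝ ι :=
  WithLp.toLp 2 fun v => if v ∈ S then (S.card : ℝ)⁻¹ else 0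

section UniformVec

variable {ι : Type*} [Fintype ι] [DecidableEq ι]

lemma inner_uniformVec_of_subset {S T : Finset ι} (hTS : T ⊆ S) (hT : T.Nonempty) :
    ⟪uniformVec S, uniformVec T⟫ = (S.card : ℝ)⁻¹ := by
  have hTcard : (T.card : ℝ) ≠ 0 := by exact_mod_cast hT.card_pos.ne'
  have hterm : ∀ v, ⟪uniformVec S v, uniformVec T v⟫ =
      if v ∈ T then (S.card : ℝ)⁻¹ * (T.card : ℝ)⁻¹ else 0 := by
    intro v
    by_cases hv : v ∈ T
    · simp [uniformVec, hv, hTS hv, mul_comm]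
    · simp [uniformVec, hv]
  rw [PiLp.inner_apply]
  simp only [hterm, Finset.sum_ite_mem, Finset.univ_inter, Finset.sum_const, nsmul_eq_mul]
  field_simp

lemma norm_uniformVec_sq {S : Finset ι} (hS : S.Nonempty) :
    ‖uniformVec S‖ ^ 2 = (S.card : ℝ)⁻¹ := by
  rw [← real_inner_self_eq_norm_sq, inner_uniformVec_of_subset subset_rfl hS]

lemma norm_uniformVec_sub_sq {S T : Finset ι} (hTS : T ⊆ S) (hT : T.Nonempty) :
    ‖uniformVec S - uniformVec T‖ ^ 2 = (T.card : ℝ)⁻¹ - (S.card : ℝ)⁻¹ := by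
  rw [norm_sub_sq_real, inner_uniformVec_of_subset hTS hT, norm_uniformVec_sq (hT.mono hTS),
    norm_uniformVec_sq hT]
  ring

lemma uniformVec_sub_apply_of_notMem {S T : Finset ι} (hTS : T ⊆ S) {v : ι} (hv : v ∉ S) :
    (uniformVec S - uniformVec T) v = 0 := by
  have hvT : v ∉ T := fun h => hv (hTS h)
  simp [uniformVec, hv, hvT]

lemma norm_uniformVec_sub_sq_le {S T : Finset ι} (hTS : T ⊆ S) (hT : T.Nonempty) {θ : ℝ}
    (hθ : θ < 1) (hcard : (1 - θ) * S.card ≤ T.card) :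
    ‖uniformVec S - uniformVec T‖ ^ 2 ≤ θ / (1 - θ) * (S.card : ℝ)⁻¹ := by
  rw [norm_uniformVec_sub_sq hTS hT]
  exact inv_sub_inv_le_of_one_sub_mul_le hθ (by exact_mod_cast (hT.mono hTS).card_pos) hcard

lemma inner_uniformVec_sub_eq_zero_of_disjoint {S₁ S₂ T₁ T₂ : Finset ι} (hdisj : Disjoint S₁ S₂)
    (hT₁ : T₁ ⊆ S₁) (hT₂ : T₂ ⊆ S₂) :
    ⟪uniformVec S₁ - uniformVec T₁, uniformVec S₂ - uniformVec T₂⟫ = 0 := by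
  refine inner_eq_zero_of_forall_apply_eq_zero_or fun v => ?_
  by_cases hv : v ∈ S₁
  · exact .inr (uniformVec_sub_apply_of_notMem hT₂ (Finset.disjoint_left.mp hdisj hv))
  · exact .inl (uniformVec_sub_apply_of_notMem hT₁ hv)

end UniformVec

lemma qavg_apply {n : ℕ} {S : Finset (Fin n)} (hS : S.Nonempty) (v : Fin n) :
    qavg S v = uniformVec S v - 1 / n := by
  have hcard : (S.card : ℝ) ≠ 0 := by exact_mod_cast hS.card_pos.ne'
  by_cases hv : v ∈ S <;>
    simp [qavg, qzero, uniformVec, hv, Finset.sum_sub_distrib] <;> field_simp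

lemma qavg_sub_qavg {n : ℕ} {S T : Finset (Fin n)} (hS : S.Nonempty) (hT : T.Nonempty) :
    qavg S - qavg T = uniformVec S - uniformVec T := by
  ext v
  simp only [PiLp.sub_apply, qavg_apply hS, qavg_apply hT]
  ring

theorem stmt13_general {n : ℕ} (S₁ S₂ : Finset (Fin n)) (hdisj : Disjoint S₁ S₂)
    (θ : ℝ) (hθ1 : θ < 1)
    (T₁ T₂ : Finset (Fin n)) (hT1 : T₁ ⊆ S₁) (hT2 : T₂ ⊆ S₂)
    (hT1ne : T₁.Nonempty) (hT2ne : T₂.Nonempty)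
    (hT1c : (1 - θ) * S₁.card ≤ T₁.card) (hT2c : (1 - θ) * S₂.card ≤ T₂.card)
    (α β : ℝ) :
    ‖(α • qavg S₁ + β • qavg S₂) - (α • qavg T₁ + β • qavg T₂)‖ ^ 2 ≤
      (θ / (1 - θ)) * (α ^ 2 / S₁.card + β ^ 2 / S₂.card) := by
  have hsplit : (α • qavg S₁ + β • qavg S₂) - (α • qavg T₁ + β • qavg T₂) =
      α • (uniformVec S₁ - uniformVec T₁) + β • (uniformVec S₂ - uniformVec T₂) := by
    rw [← qavg_sub_qavg (hT1ne.mono hT1) hT1ne, ← qavg_sub_qavg (hT2ne.mono hT2) hT2ne]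
    module
  rw [hsplit, norm_smul_add_smul_sq_of_inner_eq_zero
    (inner_uniformVec_sub_eq_zero_of_disjoint hdisj hT1 hT2)]
  calc α ^ 2 * ‖uniformVec S₁ - uniformVec T₁‖ ^ 2 + β ^ 2 * ‖uniformVec S₂ - uniformVec T₂‖ ^ 2
      ≤ α ^ 2 * (θ / (1 - θ) * (S₁.card : ℝ)⁻¹) + β ^ 2 * (θ / (1 - θ) * (S₂.card : ℝ)⁻¹) := by
        gcongr
        · exact norm_uniformVec_sub_sq_le hT1 hT1ne hθ1 hT1c
        · exact norm_uniformVec_sub_sq_le hT2 hT2ne hθ1 hT2c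
    _ = θ / (1 - θ) * (α ^ 2 / S₁.card + β ^ 2 / S₂.card) := by ring

theorem stmt13 {n d : ℕ} (hd : 1 ≤ d) (G : SimpleGraph (Fin n)) (hdeg : MaxDegreeLE G d)
    (S₁ S₂ : Finset (Fin n)) (h1 : S₁.Nonempty) (h2 : S₂.Nonempty) (hdisj : Disjoint S₁ S₂)
    (θ : ℝ) (hθ0 : 0 < θ) (hθ1 : θ < 1)
    (T₁ T₂ : Finset (Fin n)) (hT1 : T₁ ⊆ S₁) (hT2 : T₂ ⊆ S₂)
    (hT1ne : T₁.Nonempty) (hT2ne : T₂.Nonempty)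
    (hT1c : (1 - θ) * S₁.card ≤ T₁.card) (hT2c : (1 - θ) * S₂.card ≤ T₂.card)
    (α β : ℝ) :
    ‖(α • qavg S₁ + β • qavg S₂) - (α • qavg T₁ + β • qavg T₂)‖ ^ 2 ≤
      (θ / (1 - θ)) * (α ^ 2 / S₁.card + β ^ 2 / S₂.card) :=
  stmt13_general S₁ S₂ hdisj θ hθ1 T₁ T₂ hT1 hT2 hT1ne hT2ne hT1c hT2c α β
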